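/- Let A be the n-by-n reciprocal matrix of block form [[B, J],[J, J]] with B a 3-by-3 reciprocal matrix and n >= 4. If w is efficient for A, then there exists j in {4,...,n} such that the subvector w[{1,2,3,j}] is efficient for the principal submatrix A[{1,2,3,j}]. -/

import Mathlib

/-!
Efficiency of `w` for `A` is strong connectivity of the digraph `G(A, w)` with an arc `i → j`
whenever `a_ij ≤ w_i / w_j`: an improvement `v` of `w` cannot decrease `v / w` along an arc, and
scaling `w` down slightly on a set that no arc enters gives an improvement.

For `A = [[B, J], [J, J]]` any two vertices are joined by an arc, and the arcs at a vertex
`j ≥ 4` just compare weights. A case analysis on sources and sinks of `G(A, w)` restricted to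
`{1, 2, 3}`, each case settled by a cut of `G(A, w)`, yields a Hamiltonian path `a → b → c` of
`{1, 2, 3}` and some `j ≥ 4` with `w_a ≤ w_j ≤ w_c`. Then `a → b → c → j → a` is a Hamiltonian
cycle of `G(A[K], w[K])`, `K = {1, 2, 3, j}`.
-/

/-- A positive reciprocal (pairwise comparison) matrix. -/
def Reciprocal {n : ℕ} (A : Matrix (Fin n) (Fin n) ℝ) : Prop :=
  (∀ i j, 0 < A i j) ∧ ∀ i j, A j i = (A i j)⁻¹

/-- A positive vector `w` is efficient for `A` (Pareto optimality). -/
def Efficient {n : ℕ} (A : Matrix (Fin n) (Fin n) ℝ) (w : Fin n → ℝ) : Prop :=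
  (∀ i, 0 < w i) ∧ ∀ v : Fin n → ℝ, (∀ i, 0 < v i) →
    (∀ i j, |A i j - v i / v j| ≤ |A i j - w i / w j|) →
    ∀ i j, v i / v j = w i / w j

open Function Filter Relation Set Topology

def effArc {ι : Type*} (A : Matrix ι ι ℝ) (w : ι → ℝ) (i j : ι) : Prop :=
  A i j ≤ w i / w j

theorem Relation.reflTransGen_of_cycle {α : Type*} {R : α → α → Prop} {a b c d : α} (hab : R a b)
    (hbc : R b c) (hcd : R c d) (hda : R d a) (cover : ∀ x, x = a ∨ x = b ∨ x = c ∨ x = d)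
    (x y : α) : ReflTransGen R x y := by
  have from_a : ∀ x, ReflTransGen R a x := by
    intro x
    rcases cover x with rfl | rfl | rfl | rfl
    exacts [.refl, .single hab, (ReflTransGen.single hab).tail hbc,
      ((ReflTransGen.single hab).tail hbc).tail hcd]
  have to_a : ∀ x, ReflTransGen R x a := by
    intro x
    rcases cover x with rfl | rfl | rfl | rfl
    exacts [.refl, ((ReflTransGen.single hbc).tail hcd).tail hda,
      (ReflTransGen.single hcd).tail hda, .single hda]
  exact (to_a x).trans (from_a y)

section Efficiency

variable {n : ℕ} {A : Matrix (Fin n) (Fin n) ℝ} {w : Fin n → ℝ}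

lemma le_of_abs_sub_le_abs_sub {a x y : ℝ} (hay : a ≤ y) (h : |a - x| ≤ |a - y|) : x ≤ y := by
  rw [abs_sub_comm a y, abs_of_nonneg (sub_nonneg.2 hay)] at h
  linarith [le_abs_self (x - a), abs_sub_comm a x]

lemma efficient_of_reflTransGen (hw : ∀ i, 0 < w i) (hG : ∀ i j, ReflTransGen (effArc A w) i j) :
    Efficient A w := by
  refine ⟨hw, fun v hv hle => ?_⟩
  have mono : ∀ i j, ReflTransGen (effArc A w) i j → v i / w i ≤ v j / w j := by
    intro i j hij
    induction hij with
    | refl => exact le_rfl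
    | @tail a b _ hab ih =>
      have h := le_of_abs_sub_le_abs_sub hab (hle a b)
      rw [div_le_div_iff₀ (hv b) (hw b)] at h
      refine ih.trans ?_
      rw [div_le_div_iff₀ (hw a) (hw b)]
      linarith
  intro i j
  have h := le_antisymm (mono i j (hG i j)) (mono j i (hG j i))
  rw [div_eq_div_iff (hw i).ne' (hw j).ne'] at h
  rw [div_eq_div_iff (hv j).ne' (hw j).ne']
  linarith

theorem Efficient.exists_arc_into (hA : Reciprocal A) (hw : Efficient A w) {S : Set (Fin n)}
    (hS : S.Nonempty) (hSc : Sᶜ.Nonempty) : ∃ i ∉ S, ∃ x ∈ S, effArc A w i x := by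
  classical
  by_contra! hcut
  simp only [effArc, not_le] at hcut
  -- scaling `w` by `t` slightly below `1` on `S` moves every ratio across the cut towards `A`
  have hnear : ∀ᶠ t in 𝓝 (1 : ℝ), 0 < t ∧ ∀ i x, i ∉ S → x ∈ S → w i / w x / t < A i x := by
    refine (lt_mem_nhds one_pos).and (eventually_all.2 fun i => eventually_all.2 fun x => ?_)
    simp only [eventually_imp_distrib_left]
    intro hi hx
    have hlim : Tendsto (fun t => w i / w x / t) (𝓝 1) (𝓝 (w i / w x / 1)) :=
      tendsto_const_nhds.div tendsto_id one_ne_zero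
    exact hlim.eventually (gt_mem_nhds (by simpa using hcut i hi x hx))
  obtain ⟨t, ⟨ht0, hcross⟩, ht1⟩ :=
    ((hnear.filter_mono nhdsWithin_le_nhds).and (self_mem_nhdsWithin : Iio (1 : ℝ) ∈ 𝓝[<] 1)).exists
  have ht1 : t < 1 := ht1
  let v : Fin n → ℝ := fun y => if y ∈ S then t * w y else w y
  have hv : ∀ i, 0 < v i := fun i => by
    by_cases hi : i ∈ S <;> simp only [v, hi, if_true, if_false] <;> have := hw.1 i <;> positivity
  have hr : ∀ i x, 0 < w i / w x := fun i x => div_pos (hw.1 i) (hw.1 x)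
  have hvS : ∀ i x, i ∉ S → x ∈ S → v i / v x = w i / w x / t := fun i x hi hx => by
    simp only [v, hi, hx, if_true, if_false]; rw [div_div, mul_comm]
  have hle : ∀ i j, |A i j - v i / v j| ≤ |A i j - w i / w j| := by
    intro i j
    rw [abs_sub_comm _ (v i / v j), abs_sub_comm (A i j)]
    by_cases hi : i ∈ S <;> by_cases hj : j ∈ S
    · simp only [v, hi, hj, if_true, mul_div_mul_left _ _ ht0.ne', le_rfl]
    · have hvij : v i / v j = t * (w i / w j) := by
        simp only [v, hi, hj, if_true, if_false, mul_div_assoc]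
      have hA' : A i j ≤ t * (w i / w j) :=
        calc A i j = (A j i)⁻¹ := hA.2 j i
          _ ≤ (w j / w i / t)⁻¹ := inv_anti₀ (div_pos (hr j i) ht0) (hcross j i hj hi).le
          _ = t * (w i / w j) := by rw [inv_div, div_div_eq_mul_div, mul_div_assoc]
      rw [hvij]
      exact Set.abs_sub_left_of_mem_uIcc (Set.mem_uIcc.2 (Or.inl
        ⟨hA', mul_le_of_le_one_left (hr i j).le ht1.le⟩))
    · rw [hvS i j hi hj]
      exact Set.abs_sub_left_of_mem_uIcc (Set.mem_uIcc.2 (Or.inr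
        ⟨le_div_self (hr i j).le ht0 ht1.le, (hcross i j hi hj).le⟩))
    · simp only [v, hi, hj, if_false, le_rfl]
  obtain ⟨i, hi⟩ := hSc
  obtain ⟨x, hx⟩ := hS
  have h := hw.2 v hv hle i x
  rw [hvS i x hi hx, div_eq_iff ht0.ne'] at h
  nlinarith [hr i x]

lemma Reciprocal.effArc_total (hA : Reciprocal A) (hw : ∀ i, 0 < w i) (i j : Fin n) :
    effArc A w i j ∨ effArc A w j i := by
  refine (le_or_gt (A i j) (w i / w j)).imp id fun hlt => ?_
  rw [effArc, hA.2 i j, ← inv_div]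
  exact inv_anti₀ (div_pos (hw i) (hw j)) hlt.le

end Efficiency

/-- `R` behaves like `G(A, w)` for a reciprocal `A` that is all ones outside the block indexed by
`h`; `entered` is strong connectivity, phrased through cuts. -/
structure BlockDigraph {V ι : Type*} (R : V → V → Prop) (w : V → ℝ) (h : ι → V) : Prop where
  injective : Injective h
  total : ∀ x y, R x y ∨ R y x
  arc_iff : ∀ x y, x ∉ range h ∨ y ∉ range h → (R x y ↔ w y ≤ w x)
  entered : ∀ S : Set V, S.Nonempty → Sᶜ.Nonempty → ∃ i ∉ S, ∃ x ∈ S, R i x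

theorem Efficient.blockDigraph {n k : ℕ} (hk : k ≤ n) {A : Matrix (Fin n) (Fin n) ℝ}
    {w : Fin n → ℝ} (hA : Reciprocal A) (hblock : ∀ i j : Fin n, k ≤ i.val ∨ k ≤ j.val → A i j = 1)
    (hw : Efficient A w) : BlockDigraph (effArc A w) w (Fin.castLE hk) where
  injective := Fin.castLE_injective hk
  total := hA.effArc_total hw.1
  arc_iff i j hij := by
    simp only [Fin.range_castLE, mem_ofPred_eq, not_lt] at hij
    rw [effArc, hblock i j hij, one_le_div (hw.1 j)]
  entered _ hS hSc := hw.exists_arc_into hA hS hSc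

namespace BlockDigraph

variable {V ι : Type*} {R : V → V → Prop} {w : V → ℝ} {h : ι → V}

theorem reverse (G : BlockDigraph R w h) : BlockDigraph (fun x y => R y x) (-w) h where
  injective := G.injective
  total x y := G.total y x
  arc_iff x y hxy := by simpa only [Pi.neg_apply, neg_le_neg_iff] using G.arc_iff y x hxy.symm
  entered S hS hSc := by
    obtain ⟨i, hi, x, hx, hix⟩ := G.entered Sᶜ hSc (by rwa [compl_compl])
    exact ⟨x, hx, i, by simpa using hi, hix⟩

theorem exists_tail_between (G : BlockDigraph R w h) {P : Set ι}
    (hP : ∀ i ∉ P, ∀ j ∈ P, ¬R (h i) (h j)) {m : ℝ} (hm : ∀ j ∈ P, m ≤ w (h j))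
    (hPne : P.Nonempty) (hPc : ∃ i, i ∉ P) :
    ∃ u ∉ range h, ∃ a ∉ P, m ≤ w u ∧ w u ≤ w (h a) := by
  obtain ⟨j, hj⟩ := hPne
  obtain ⟨a, ha⟩ := hPc
  -- an arc entering this set can only run from the block to a vertex off it
  obtain ⟨y, hy, x, hx, hyx⟩ := G.entered (h '' P ∪ {x | x ∉ range h ∧ m ≤ w x})
    ⟨h j, .inl (mem_image_of_mem h hj)⟩
    ⟨h a, by simp [G.injective.eq_iff, ha]⟩
  rw [mem_union, not_or] at hy
  have hyP : ∀ i, y = h i → i ∉ P := fun i hyi hi => hy.1 (hyi ▸ mem_image_of_mem h hi)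
  have hym : y ∉ range h → w y < m := fun hyh => lt_of_not_ge fun hmy => hy.2 ⟨hyh, hmy⟩
  rcases hx with ⟨j, hj, rfl⟩ | ⟨hx, hmx⟩
  · by_cases hyh : y ∈ range h
    · obtain ⟨i, rfl⟩ := hyh
      exact (hP i (hyP i rfl) j hj hyx).elim
    · linarith [(G.arc_iff _ _ (Or.inl hyh)).1 hyx, hym hyh, hm j hj]
  · have hxy := (G.arc_iff _ _ (Or.inr hx)).1 hyx
    by_cases hyh : y ∈ range h
    · obtain ⟨i, rfl⟩ := hyh
      exact ⟨x, hx, i, hyP i rfl, hmx, hxy⟩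
    · linarith [hym hyh]

theorem exists_weight_le_head [Nonempty ι] (G : BlockDigraph R w h) (u : V) :
    ∃ i, w u ≤ w (h i) := by
  by_contra! hlt
  obtain ⟨y, hy, x, hx, hyx⟩ := G.entered {x | w u ≤ w x}
    ⟨u, le_refl (w u)⟩ ⟨h (Classical.arbitrary ι), (hlt _).not_ge⟩
  simp only [mem_ofPred_eq, not_le] at hy hx
  by_cases hxh : x ∈ range h
  · obtain ⟨i, rfl⟩ := hxh
    exact (hlt i).not_ge hx
  · linarith [(G.arc_iff y x (Or.inr hxh)).1 hyx]

theorem exists_head_le_weight [Nonempty ι] (G : BlockDigraph R w h) (u : V) :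
    ∃ i, w (h i) ≤ w u := by
  simpa only [Pi.neg_apply, neg_le_neg_iff] using G.reverse.exists_weight_le_head u

end BlockDigraph

lemma fin3_exists_ne (a b : Fin 3) : ∃ c, c ≠ a ∧ c ≠ b := by
  revert a b; decide

lemma fin3_eq_or_eq_or_eq {a b c : Fin 3} (hab : a ≠ b) (hac : a ≠ c) (hbc : b ≠ c) (x : Fin 3) :
    x = a ∨ x = b ∨ x = c := by
  revert a b c x; decide

lemma fin4_eq_or_eq_or_eq_or_eq_last {a b c : Fin 3} (hab : a ≠ b) (hac : a ≠ c) (hbc : b ≠ c)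
    (x : Fin 4) : x = a.castSucc ∨ x = b.castSucc ∨ x = c.castSucc ∨ x = Fin.last 3 := by
  revert a b c x; decide

lemma fin3_of_exists_ne {p : Fin 3 → Prop} {a b c : Fin 3} (hab : a ≠ b) (hac : a ≠ c)
    (hbc : b ≠ c) (h : ∃ i ≠ a, p i) (hb : ¬p b) : p c := by
  obtain ⟨i, hia, hi⟩ := h
  rcases fin3_eq_or_eq_or_eq hab hac hbc i with rfl | rfl | rfl
  exacts [(hia rfl).elim, (hb hi).elim, hi]

theorem exists_cycle_of_forall_exists {T : Fin 3 → Fin 3 → Prop} (total : ∀ i j, T i j ∨ T j i)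
    (hin : ∀ j, ∃ i ≠ j, T i j) (hout : ∀ i, ∃ j ≠ i, T i j) :
    ∃ a b c, a ≠ b ∧ a ≠ c ∧ b ≠ c ∧ T a b ∧ T b c ∧ T c a := by
  obtain ⟨a, ha, h0a⟩ := hout 0
  obtain ⟨b, hb, hba⟩ := fin3_exists_ne 0 a
  by_cases hab : T a b
  · by_cases hb0 : T b 0
    · exact ⟨0, a, b, ha.symm, hb.symm, hba.symm, h0a, hab, hb0⟩
    · have hba' : T b a := fin3_of_exists_ne hb hba ha.symm (hout b) hb0
      have ha0 : T a 0 := fin3_of_exists_ne hb.symm ha.symm hba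
        (p := fun i => T i 0) (hin 0) hb0
      exact ⟨0, b, a, hb.symm, ha.symm, hba, (total b 0).resolve_left hb0, hba', ha0⟩
  · have ha0 : T a 0 := fin3_of_exists_ne hba.symm ha hb (hout a) hab
    have h0b : T 0 b := fin3_of_exists_ne hba hb ha (p := fun i => T i b) (hin b) hab
    exact ⟨0, b, a, hb.symm, ha.symm, hba, h0b, (total a b).resolve_left hab, ha0⟩

lemma exists_consecutive_between {x y z v : ℝ} (hge : v ≤ x ∨ v ≤ y ∨ v ≤ z)
    (hle : x ≤ v ∨ y ≤ v ∨ z ≤ v) : (y ≤ v ∧ v ≤ x) ∨ (z ≤ v ∧ v ≤ y) ∨ (x ≤ v ∧ v ≤ z) := by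
  rcases le_total x v with hx | hx <;> rcases le_total y v with hy | hy <;>
    rcases le_total z v with hz | hz <;> tauto

section BracketedPath

variable {V : Type*} {R : V → V → Prop} {w : V → ℝ} {h : Fin 3 → V}

/-- `c → u → a` closes the Hamiltonian path `a → b → c` of the block to a Hamiltonian cycle
through `u`. -/
def BracketedPath (R : V → V → Prop) (w : V → ℝ) (h : Fin 3 → V) : Prop :=
  ∃ u ∉ range h, ∃ a b c : Fin 3, a ≠ b ∧ a ≠ c ∧ b ≠ c ∧
    R (h a) (h b) ∧ R (h b) (h c) ∧ w (h a) ≤ w u ∧ w u ≤ w (h c)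

theorem BracketedPath.of_reverse (H : BracketedPath (fun x y => R y x) (-w) h) :
    BracketedPath R w h := by
  obtain ⟨u, hu, a, b, c, hab, hac, hbc, hab', hbc', hau, huc⟩ := H
  exact ⟨u, hu, c, b, a, hbc.symm, hac.symm, hab.symm, hbc', hab', neg_le_neg_iff.1 huc,
    neg_le_neg_iff.1 hau⟩

namespace BlockDigraph

theorem bracketedPath_of_source (G : BlockDigraph R w h) {s : Fin 3}
    (hs : ∀ i ≠ s, ¬R (h i) (h s)) (hout : ∀ i, ∃ j ≠ i, R (h i) (h j)) :
    BracketedPath R w h := by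
  obtain ⟨c, hcs, -⟩ := fin3_exists_ne s s
  obtain ⟨u, hu, a, has, hsu, hua⟩ := G.exists_tail_between (P := {s}) (m := w (h s))
    (fun i hi j hj => hj ▸ hs i hi) (fun j hj => hj ▸ le_rfl) ⟨s, rfl⟩ ⟨c, hcs⟩
  obtain ⟨b, hbs, hba⟩ := fin3_exists_ne s a
  have hsb : R (h s) (h b) := (G.total _ _).resolve_right (hs b hbs)
  have hba' : R (h b) (h a) := fin3_of_exists_ne hbs hba (Ne.symm has) (hout b) (hs b hbs)
  exact ⟨u, hu, s, b, a, hbs.symm, Ne.symm has, hba, hsb, hba', hsu, hua⟩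

theorem bracketedPath_of_source_of_sink (G : BlockDigraph R w h) {s t : Fin 3}
    (hs : ∀ i ≠ s, ¬R (h i) (h s)) (ht : ∀ i ≠ t, ¬R (h t) (h i)) : BracketedPath R w h := by
  have hst : s ≠ t := by
    rintro rfl
    obtain ⟨i, hi, -⟩ := fin3_exists_ne s s
    exact (G.total _ _).elim (hs i hi) (ht i hi)
  obtain ⟨c, hcs, hct⟩ := fin3_exists_ne s t
  have hsc : R (h s) (h c) := (G.total _ _).resolve_right (hs c hcs)
  have hct' : R (h c) (h t) := (G.total _ _).resolve_left (ht c hct)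
  suffices ∃ u ∉ range h, w (h s) ≤ w u ∧ w u ≤ w (h t) by
    obtain ⟨u, hu, hsu, hut⟩ := this
    exact ⟨u, hu, s, c, t, hcs.symm, hst, hct, hsc, hct', hsu, hut⟩
  -- `P = {s, c}` needs `w s ≤ w c`; otherwise `P = {s}` cannot return `a = c`
  rcases le_or_gt (w (h s)) (w (h c)) with hwc | hwc
  · obtain ⟨u, hu, a, hat, hsu, hua⟩ := G.exists_tail_between (P := {t}ᶜ) (m := w (h s))
      (fun i hi j hj => not_not.1 hi ▸ ht j hj)
      (fun j hj => by
        rcases fin3_eq_or_eq_or_eq hcs.symm hst hct j with rfl | rfl | rfl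
        exacts [le_rfl, hwc, (hj rfl).elim])
      ⟨s, hst⟩ ⟨t, not_not.2 rfl⟩
    exact ⟨u, hu, hsu, not_not.1 hat ▸ hua⟩
  · obtain ⟨u, hu, a, has, hsu, hua⟩ := G.exists_tail_between (P := {s}) (m := w (h s))
      (fun i hi j hj => hj ▸ hs i hi) (fun j hj => hj ▸ le_rfl) ⟨s, rfl⟩ ⟨t, Ne.symm hst⟩
    rcases fin3_eq_or_eq_or_eq hcs.symm hst hct a with rfl | rfl | rfl
    · exact (has rfl).elim
    · linarith
    · exact ⟨u, hu, hsu, hua⟩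

theorem bracketedPath_of_strong (G : BlockDigraph R w h) (hT : ∃ u, u ∉ range h)
    (hin : ∀ j, ∃ i ≠ j, R (h i) (h j)) (hout : ∀ i, ∃ j ≠ i, R (h i) (h j)) :
    BracketedPath R w h := by
  obtain ⟨a, b, c, hab, hac, hbc, rab, rbc, rca⟩ :=
    exists_cycle_of_forall_exists (fun i j => G.total (h i) (h j)) hin hout
  obtain ⟨u, hu⟩ := hT
  have cover := fin3_eq_or_eq_or_eq hab hac hbc
  obtain ⟨p, hp⟩ := G.exists_weight_le_head u
  obtain ⟨q, hq⟩ := G.exists_head_le_weight u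
  -- some arc `x → y` of the cycle has `w y ≤ w u ≤ w x`; the cycle read from `y` to `x` works
  rcases exists_consecutive_between (x := w (h a)) (y := w (h b)) (z := w (h c)) (v := w u)
    (by rcases cover p with rfl | rfl | rfl <;> simp [hp])
    (by rcases cover q with rfl | rfl | rfl <;> simp [hq]) with ⟨h1, h2⟩ | ⟨h1, h2⟩ | ⟨h1, h2⟩
  · exact ⟨u, hu, b, c, a, hbc, hab.symm, hac.symm, rbc, rca, h1, h2⟩
  · exact ⟨u, hu, c, a, b, hac.symm, hbc.symm, hab, rca, rab, h1, h2⟩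
  · exact ⟨u, hu, a, b, c, hab, hac, hbc, rab, rbc, h1, h2⟩

theorem bracketedPath (G : BlockDigraph R w h) (hT : ∃ u, u ∉ range h) : BracketedPath R w h := by
  by_cases hsrc : ∃ s, ∀ i ≠ s, ¬R (h i) (h s) <;> by_cases hsnk : ∃ t, ∀ i ≠ t, ¬R (h t) (h i)
  · obtain ⟨s, hs⟩ := hsrc
    obtain ⟨t, ht⟩ := hsnk
    exact G.bracketedPath_of_source_of_sink hs ht
  · push Not at hsnk
    obtain ⟨s, hs⟩ := hsrc
    exact G.bracketedPath_of_source hs hsnk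
  · push Not at hsrc
    obtain ⟨t, ht⟩ := hsnk
    exact (G.reverse.bracketedPath_of_source ht hsrc).of_reverse
  · push Not at hsrc hsnk
    exact G.bracketedPath_of_strong hT hsrc hsnk

theorem exists_reflTransGen (G : BlockDigraph R w h) (hT : ∃ u, u ∉ range h) :
    ∃ u ∉ range h, ∀ e : Fin 4 → V, (∀ i, e (Fin.castSucc i) = h i) → e (Fin.last 3) = u →
      ∀ p q, ReflTransGen (fun p q => R (e p) (e q)) p q := by
  obtain ⟨u, hu, a, b, c, hab, hac, hbc, rab, rbc, hau, huc⟩ := G.bracketedPath hT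
  refine ⟨u, hu, fun e he hu' => reflTransGen_of_cycle (a := a.castSucc) (b := b.castSucc)
    (c := c.castSucc) (d := Fin.last 3) ?_ ?_ ?_ ?_ ?_⟩
  · simpa only [he] using rab
  · simpa only [he] using rbc
  · simpa only [he, hu'] using (G.arc_iff _ _ (Or.inr hu)).2 huc
  · simpa only [he, hu'] using (G.arc_iff _ _ (Or.inl hu)).2 hau
  · exact fin4_eq_or_eq_or_eq_or_eq_last hab hac hbc

end BlockDigraph

end BracketedPath

/-- For a 3-block perturbed consistent matrix with `n ≥ 4`, every efficient
vector has a subvector `w[{1,2,3,j}]`, `j ∈ {4,…,n}`, efficient for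
`A[{1,2,3,j}]`. -/
theorem stmt_13 {n : ℕ} (hn : 4 ≤ n) (A : Matrix (Fin n) (Fin n) ℝ)
    (hA : Reciprocal A)
    (hblock : ∀ i j : Fin n, 3 ≤ i.val ∨ 3 ≤ j.val → A i j = 1)
    (w : Fin n → ℝ) (hw : Efficient A w) :
    ∃ j : Fin n, 3 ≤ j.val ∧
      (let e : Fin 4 → Fin n := fun k =>
        if h : k.val < 3 then ⟨k.val, by omega⟩ else j
      Efficient (A.submatrix e e) (w ∘ e)) := by
  have hrange := Fin.range_castLE (by omega : 3 ≤ n)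
  obtain ⟨j, hj, hreach⟩ := (hw.blockDigraph (by omega) hA hblock).exists_reflTransGen
    ⟨⟨3, by omega⟩, by simp [hrange]⟩
  refine ⟨j, by simpa [hrange] using hj, ?_⟩
  intro e
  exact efficient_of_reflTransGen (fun _ => hw.1 _)
    (hreach e (fun i => dif_pos i.isLt) (dif_neg (lt_irrefl 3)))
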